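/- arXiv:1101.4393 — 4 statements merged into one kernel-verified Lean document; each statement's English description precedes it below -/
import Mathlib

section
/- Let G be a connected bipartite graph with n vertices, diameter d, and bipartition V(G) = A ∪ B with |A| = p, |B| = q, p + q = n; let δ_A and δ_B be the minimum degrees among vertices of A and of B, respectively. If d is odd, then ρ(G) ≤ (2(d−1)n + 1 − d²)/4 + (1/2)·√((d−1)²n² + 4δ_Aδ_B(d−1)² + 4pq(2d−1) − 4d(d−1)(pδ_A + qδ_B)). -/
/-!
Write `d = 2m + 1` and split the distance matrix `D` along the bipartition. Inside a part all
distances are even and at most `2m`; seen from `u ∈ A`, the layer `{v ∈ A | d(u, v) ≥ 2j}`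
misses the `j` vertices of `A` at distances `0, 2, …, 2j - 2` on a geodesic, so summing over
the layers bounds the row sums inside `A` by `2m|A| - m(m + 1)`. Across the parts the
neighbours of `u` are at distance `1` and the other vertices at distance at most `d`, giving
`d|B| - (d - 1)δ_A`. If `D x = λ x`, then `|λ| |x| ≤ D |x|` entrywise; evaluated at the maxima
of `|x|` on `A` and on `B` this shows that `|λ|` is at most the largest eigenvalue of the
`2 × 2` matrix of these row-sum bounds, which is the stated expression.
-/

open SimpleGraph Finset

/-- The distance matrix of a graph `G`: the `(i,j)` entry is the graph distance
between `i` and `j`, as a real number. -/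
noncomputable def distMatrix {V : Type*} [Fintype V] (G : SimpleGraph V) : Matrix V V ℝ :=
  fun i j => (G.dist i j : ℝ)

lemma distMatrix_isHermitian {V : Type*} [Fintype V] (G : SimpleGraph V) :
    (distMatrix G).IsHermitian := by
  unfold Matrix.IsHermitian
  ext i j
  simp [distMatrix, Matrix.conjTranspose_apply, SimpleGraph.dist_comm]

/-- The distance spectral radius of `G`: the largest eigenvalue of the distance matrix. -/
noncomputable def distSpectralRadius {V : Type*} [Fintype V] [DecidableEq V]
    (G : SimpleGraph V) : ℝ :=
  ⨆ i, (distMatrix_isHermitian G).eigenvalues i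

/-- The distance energy of `G`: the sum of the absolute values of the eigenvalues of
the distance matrix. -/
noncomputable def distEnergy {V : Type*} [Fintype V] [DecidableEq V]
    (G : SimpleGraph V) : ℝ :=
  ∑ i, |(distMatrix_isHermitian G).eigenvalues i|

/-- The largest eigenvalue of the quotient matrix `!![α, γ; ε, β]`. -/
noncomputable def perronRoot (α β γ ε : ℝ) : ℝ := (α + β) / 2 + √((α - β) ^ 2 + 4 * γ * ε) / 2

lemma le_perronRoot {α β γ ε μ a b : ℝ} (hγ : 0 ≤ γ) (hε : 0 ≤ ε) (hab : 0 < a + b)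
    (ha : μ * a ≤ α * a + γ * b) (hb : μ * b ≤ ε * a + β * b) : μ ≤ perronRoot α β γ ε := by
  by_contra! hlt
  unfold perronRoot at hlt
  have hS : |α - β| ≤ √((α - β) ^ 2 + 4 * γ * ε) :=
    Real.abs_le_sqrt (by nlinarith [mul_nonneg hγ hε])
  obtain ⟨hα, hβ⟩ : α < μ ∧ β < μ := by
    constructor <;> linarith [le_abs_self (α - β), neg_abs_le (α - β)]
  -- `μ` lies beyond the largest root of the characteristic polynomial `(t - α) (t - β) - γ ε`
  have hchar : γ * ε < (μ - α) * (μ - β) := by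
    have := (Real.sqrt_lt' (by linarith)).1 (by linarith : _ < 2 * μ - α - β)
    nlinarith
  have ha₀ : 0 < a := by
    by_contra! ha₀
    nlinarith [mul_nonneg hε (neg_nonneg.2 ha₀)]
  have hb₀ : 0 < b := by
    by_contra! hb₀
    nlinarith [mul_nonneg hγ (neg_nonneg.2 hb₀)]
  have hprod : (μ - α) * a * ((μ - β) * b) ≤ γ * b * (ε * a) :=
    mul_le_mul (by linarith) (by linarith) (by positivity) (by positivity)
  nlinarith [mul_pos ha₀ hb₀]

lemma sum_range_two_mul_add_one (m : ℕ) : ∑ j ∈ range m, 2 * (j + 1) = m * (m + 1) := by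
  induction m with
  | zero => rfl
  | succ m ih => rw [sum_range_succ, ih]; ring

namespace Matrix

variable {V : Type*} [Fintype V]

lemma abs_mul_abs_le_sum_mul_abs {M : Matrix V V ℝ} (hnonneg : ∀ i j, 0 ≤ M i j) {x : V → ℝ}
    {μ : ℝ} (hx : M *ᵥ x = μ • x) (i : V) : |μ| * |x i| ≤ ∑ j, M i j * |x j| :=
  calc |μ| * |x i| = |∑ j, M i j * x j| := by
        rw [← abs_mul, ← smul_eq_mul, ← Pi.smul_apply, ← hx]; rfl
    _ ≤ ∑ j, |M i j * x j| := abs_sum_le_sum_abs _ _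
    _ = ∑ j, M i j * |x j| := by simp only [abs_mul, abs_of_nonneg (hnonneg i _)]

variable [DecidableEq V] {M : Matrix V V ℝ} {A B : Finset V} {α β γ ε : ℝ}

-- Evaluate `|μ| |x| ≤ M |x|` at a maximiser of `|x|` on `A` and at one on `B`.
theorem le_perronRoot_of_mulVec_eq_smul (hnonneg : ∀ i j, 0 ≤ M i j) (hdisj : Disjoint A B)
    (hcover : A ∪ B = univ) (hA : A.Nonempty) (hB : B.Nonempty)
    (hAA : ∀ i ∈ A, ∑ j ∈ A, M i j ≤ α) (hAB : ∀ i ∈ A, ∑ j ∈ B, M i j ≤ γ)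
    (hBA : ∀ i ∈ B, ∑ j ∈ A, M i j ≤ ε) (hBB : ∀ i ∈ B, ∑ j ∈ B, M i j ≤ β)
    {x : V → ℝ} (hx₀ : x ≠ 0) {μ : ℝ} (hx : M *ᵥ x = μ • x) : μ ≤ perronRoot α β γ ε := by
  obtain ⟨a, ha, hamax⟩ := exists_max_image A (|x ·|) hA
  obtain ⟨b, hb, hbmax⟩ := exists_max_image B (|x ·|) hB
  have hpart (i : V) (S : Finset V) (c C : ℝ) (hC : ∀ j ∈ S, |x j| ≤ C) (h0 : 0 ≤ C)
      (hc : ∑ j ∈ S, M i j ≤ c) : ∑ j ∈ S, M i j * |x j| ≤ c * C :=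
    calc ∑ j ∈ S, M i j * |x j| ≤ ∑ j ∈ S, M i j * C :=
          sum_le_sum fun j hj => mul_le_mul_of_nonneg_left (hC j hj) (hnonneg i j)
      _ ≤ c * C := by rw [← sum_mul]; exact mul_le_mul_of_nonneg_right hc h0
  have hrow (i : V) (cA cB : ℝ) (hcA : ∑ j ∈ A, M i j ≤ cA) (hcB : ∑ j ∈ B, M i j ≤ cB) :
      |μ| * |x i| ≤ cA * |x a| + cB * |x b| :=
    calc |μ| * |x i| ≤ ∑ j, M i j * |x j| := abs_mul_abs_le_sum_mul_abs hnonneg hx i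
      _ = ∑ j ∈ A, M i j * |x j| + ∑ j ∈ B, M i j * |x j| := by rw [← sum_union hdisj, hcover]
      _ ≤ cA * |x a| + cB * |x b| :=
        add_le_add (hpart i A cA _ hamax (abs_nonneg _) hcA)
          (hpart i B cB _ hbmax (abs_nonneg _) hcB)
  have hpos : 0 < |x a| + |x b| := by
    obtain ⟨k, hk⟩ := Function.ne_iff.1 hx₀
    rcases mem_union.1 (hcover ▸ mem_univ k) with hkA | hkB
    · linarith [abs_pos.2 hk, hamax k hkA, abs_nonneg (x b)]
    · linarith [abs_pos.2 hk, hbmax k hkB, abs_nonneg (x a)]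
  have hγ : 0 ≤ γ := (sum_nonneg fun j _ => hnonneg a j).trans (hAB a ha)
  have hε : 0 ≤ ε := (sum_nonneg fun j _ => hnonneg b j).trans (hBA b hb)
  exact (le_abs_self μ).trans <| le_perronRoot hγ hε hpos
    (hrow a α γ (hAA a ha) (hAB a ha)) (hrow b ε β (hBA b hb) (hBB b hb))

lemma IsHermitian.eigenvalues_le_perronRoot (hM : M.IsHermitian) (hnonneg : ∀ i j, 0 ≤ M i j)
    (hdisj : Disjoint A B) (hcover : A ∪ B = univ) (hA : A.Nonempty) (hB : B.Nonempty)
    (hAA : ∀ i ∈ A, ∑ j ∈ A, M i j ≤ α) (hAB : ∀ i ∈ A, ∑ j ∈ B, M i j ≤ γ)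
    (hBA : ∀ i ∈ B, ∑ j ∈ A, M i j ≤ ε) (hBB : ∀ i ∈ B, ∑ j ∈ B, M i j ≤ β) (i : V) :
    hM.eigenvalues i ≤ perronRoot α β γ ε :=
  le_perronRoot_of_mulVec_eq_smul hnonneg hdisj hcover hA hB hAA hAB hBA hBB
    ((WithLp.ofLp_eq_zero 2).ne.2 (hM.eigenvectorBasis.orthonormal.ne_zero i))
    (hM.mulVec_eigenvectorBasis i)

end Matrix

namespace SimpleGraph

variable {V : Type*} {G : SimpleGraph V}

lemma Walk.dist_getVert_of_length_eq_dist {u v : V} {p : G.Walk u v} (hp : p.length = G.dist u v)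
    {k : ℕ} (hk : k ≤ p.length) : G.dist u (p.getVert k) = k := by
  rw [← length_eq_dist_of_subwalk hp (p.isSubwalk_take k), Walk.take_length, min_eq_left hk]

lemma IsBipartiteWith.even_dist_iff {s t : Set V} (h : G.IsBipartiteWith s t) {u v : V}
    (huv : G.Reachable u v) : Even (G.dist u v) ↔ (u ∈ s ↔ v ∈ s) := by
  classical
  let c : G.Coloring Bool := Coloring.mk (fun w => decide (w ∈ s)) fun {w w'} hadj => by
    rcases h.mem_of_adj hadj with ⟨hw, hw'⟩ | ⟨hw, hw'⟩
    · simp [hw, Set.disjoint_right.1 h.disjoint hw']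
    · simp [hw', Set.disjoint_right.1 h.disjoint hw]
  obtain ⟨p, hp⟩ := huv.exists_walk_length_eq_dist
  rw [← hp, c.even_length_iff_congr p]
  simp [c, Coloring.mk]

variable {A B : Finset V}

lemma IsBipartiteWith.exists_dist_eq_of_odd [Fintype V] [DecidableEq V]
    (h : G.IsBipartiteWith ↑A ↑B) (hcover : A ∪ B = univ) {x y : V} (hxy : G.Reachable x y)
    (hodd : Odd (G.dist x y)) :
    ∃ a ∈ A, ∃ b ∈ B, G.dist a b = G.dist x y := by
  have hsplit : ¬(x ∈ A ↔ y ∈ A) := (h.even_dist_iff hxy).not.1 (Nat.not_even_iff_odd.2 hodd)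
  have hmem (v : V) : v ∈ A ∨ v ∈ B := mem_union.1 (hcover ▸ mem_univ v)
  by_cases hx : x ∈ A
  · exact ⟨x, hx, y, (hmem y).resolve_left (by tauto), rfl⟩
  · exact ⟨y, by tauto, x, (hmem x).resolve_left hx, dist_comm⟩

lemma IsBipartiteWith.le_card_filter_dist_lt (h : G.IsBipartiteWith ↑A ↑B) (hG : G.Connected)
    {u w : V} (hu : u ∈ A) {j : ℕ} (hw : 2 * j ≤ G.dist u w) :
    j ≤ #{v ∈ A | G.dist u v < 2 * j} := by
  obtain ⟨p, hp⟩ := (hG u w).exists_walk_length_eq_dist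
  have hdist (i : ℕ) (hi : i < j) : G.dist u (p.getVert (2 * i)) = 2 * i :=
    Walk.dist_getVert_of_length_eq_dist hp (by omega)
  have hmaps : Set.MapsTo (fun i => p.getVert (2 * i)) (range j)
      ↑{v ∈ A | G.dist u v < 2 * j} := by
    intro i hi
    rw [coe_range, Set.mem_Iio] at hi
    have heven : Even (G.dist u (p.getVert (2 * i))) := by rw [hdist i hi]; exact even_two_mul i
    rw [mem_coe, mem_filter, hdist i hi]
    exact ⟨((h.even_dist_iff (hG _ _)).1 heven).1 hu, by omega⟩
  have hinj : Set.InjOn (fun i => p.getVert (2 * i)) (range j) := by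
    intro i hi i' hi' hii'
    rw [coe_range, Set.mem_Iio] at hi hi'
    have := congrArg (G.dist u) hii'
    simp only [hdist i hi, hdist i' hi'] at this
    omega
  simpa using card_le_card_of_injOn _ hmaps hinj

lemma IsBipartiteWith.card_filter_le_dist_add_le (h : G.IsBipartiteWith ↑A ↑B)
    (hG : G.Connected) {u : V} (hu : u ∈ A) {j : ℕ} (hj : j ≤ #A) :
    #{v ∈ A | 2 * j ≤ G.dist u v} + j ≤ #A := by
  rcases eq_empty_or_nonempty {v ∈ A | 2 * j ≤ G.dist u v} with hempty | ⟨w, hw⟩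
  · simpa [hempty] using hj
  · have hnear := h.le_card_filter_dist_lt hG hu (mem_filter.1 hw).2
    have hsplit := card_filter_add_card_filter_not (s := A) (2 * j ≤ G.dist u ·)
    simp only [not_le] at hsplit
    omega

lemma IsBipartiteWith.sum_dist_left_le (h : G.IsBipartiteWith ↑A ↑B) (hG : G.Connected)
    {u : V} (hu : u ∈ A) {m : ℕ} (hdiam : ∀ v, G.dist u v ≤ 2 * m + 1) (hm : m ≤ #A) :
    ∑ v ∈ A, (G.dist u v : ℝ) ≤ 2 * m * #A - m * (m + 1) := by
  suffices ∑ v ∈ A, G.dist u v + m * (m + 1) ≤ 2 * m * #A by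
    rw [le_sub_iff_add_le]; exact_mod_cast this
  -- layer-cake formula for a distance that is even and at most `2m`
  have hlayer : ∀ v ∈ A,
      G.dist u v = ∑ j ∈ range m, if 2 * (j + 1) ≤ G.dist u v then 2 else 0 := by
    intro v hv
    obtain ⟨s, hs⟩ := (h.even_dist_iff (hG u v)).2 (iff_of_true hu hv)
    have := hdiam v
    rw [← sum_filter, sum_const, smul_eq_mul,
      show {j ∈ range m | 2 * (j + 1) ≤ G.dist u v} = range s by ext; simp; omega, card_range]
    omega
  calc ∑ v ∈ A, G.dist u v + m * (m + 1)
      = ∑ j ∈ range m, 2 * (#{v ∈ A | 2 * (j + 1) ≤ G.dist u v} + (j + 1)) := by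
        rw [sum_congr rfl hlayer, sum_comm, ← sum_range_two_mul_add_one, ← sum_add_distrib]
        refine sum_congr rfl fun j _ => ?_
        rw [← sum_filter, sum_const, smul_eq_mul]
        ring
    _ ≤ ∑ j ∈ range m, 2 * #A := sum_le_sum fun j hj =>
        Nat.mul_le_mul_left 2 (h.card_filter_le_dist_add_le hG hu (by simp at hj; omega))
    _ = 2 * m * #A := by rw [sum_const, card_range, smul_eq_mul]; ring

lemma sum_dist_le_of_neighborFinset_subset [Fintype V] [DecidableRel G.Adj] [DecidableEq V]
    {u : V} {S : Finset V} (hN : G.neighborFinset u ⊆ S) {d : ℕ} (hd : ∀ v ∈ S, G.dist u v ≤ d)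
    {δ : ℕ} (hδ : δ ≤ G.degree u) : ∑ v ∈ S, (G.dist u v : ℝ) ≤ d * #S - (d - 1) * δ := by
  have hnear : ∑ v ∈ G.neighborFinset u, (G.dist u v : ℝ) = G.degree u := by
    rw [sum_congr rfl fun v hv => by rw [dist_eq_one_iff_adj.2 ((mem_neighborFinset G u v).1 hv)],
      ← card_neighborFinset_eq_degree]
    simp
  have hfar : ∑ v ∈ S \ G.neighborFinset u, (G.dist u v : ℝ) ≤ d * #(S \ G.neighborFinset u) := by
    rw [mul_comm, ← nsmul_eq_mul]
    exact sum_le_card_nsmul _ _ _ fun v hv => by exact_mod_cast hd v (mem_sdiff.1 hv).1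
  have hcard : (#(S \ G.neighborFinset u) : ℝ) = #S - G.degree u := by
    rw [card_sdiff_of_subset hN, card_neighborFinset_eq_degree,
      Nat.cast_sub (card_neighborFinset_eq_degree G u ▸ card_le_card hN)]
  have hδ' : ((d : ℝ) - 1) * δ ≤ ((d : ℝ) - 1) * G.degree u := by
    rcases Nat.eq_zero_or_pos (G.degree u) with h0 | hpos
    · simp [show δ = 0 by omega, h0]
    · obtain ⟨v, hv⟩ := (G.degree_pos_iff_exists_adj u).1 hpos
      have hd₁ : 1 ≤ d := dist_eq_one_iff_adj.2 hv ▸ hd v (hN ((mem_neighborFinset G u v).2 hv))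
      exact mul_le_mul_of_nonneg_left (by exact_mod_cast hδ)
        (sub_nonneg.2 (by exact_mod_cast hd₁))
  rw [← sum_sdiff hN, hnear]
  nlinarith

end SimpleGraph

theorem distSpectralRadius_bipartite_upper_bound_odd_general {n : ℕ} (G : SimpleGraph (Fin n))
    [DecidableRel G.Adj] (hconn : G.Connected) (A B : Finset (Fin n)) (p q d : ℕ)
    (hdisj : Disjoint A B) (hcover : A ∪ B = Finset.univ)
    (hA : A.card = p) (hB : B.card = q) (hpq : p + q = n)
    (hbip : ∀ x y : Fin n, G.Adj x y → (x ∈ A ∧ y ∈ B) ∨ (x ∈ B ∧ y ∈ A))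
    (hdle : ∀ x y : Fin n, G.dist x y ≤ d) (hdeq : ∃ x y : Fin n, G.dist x y = d)
    (δA δB : ℕ)
    (hδAmin : ∀ a ∈ A, δA ≤ G.degree a)
    (hδBmin : ∀ b ∈ B, δB ≤ G.degree b)
    (hd : Odd d) :
    distSpectralRadius G ≤
      (2 * ((d : ℝ) - 1) * (n : ℝ) + 1 - (d : ℝ) ^ 2) / 4 +
        1 / 2 *
          Real.sqrt (((d : ℝ) - 1) ^ 2 * (n : ℝ) ^ 2 +
            4 * (δA : ℝ) * (δB : ℝ) * ((d : ℝ) - 1) ^ 2 +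
            4 * (p : ℝ) * (q : ℝ) * (2 * (d : ℝ) - 1) -
            4 * (d : ℝ) * ((d : ℝ) - 1) * ((p : ℝ) * (δA : ℝ) + (q : ℝ) * (δB : ℝ))) := by
  obtain ⟨m, rfl⟩ := hd
  subst hpq
  have hG : G.IsBipartiteWith ↑A ↑B := ⟨disjoint_coe.2 hdisj, hbip⟩
  obtain ⟨x, y, hxy⟩ := hdeq
  obtain ⟨a, ha, b, hb, hab⟩ :=
    hG.exists_dist_eq_of_odd hcover (hconn x y) (hxy ▸ odd_two_mul_add_one m)
  have hmA : m ≤ #A :=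
    (hG.le_card_filter_dist_lt hconn ha (w := b) (by omega)).trans (card_filter_le _ _)
  have hmB : m ≤ #B :=
    (hG.symm.le_card_filter_dist_lt hconn hb (w := a) (by rw [dist_comm]; omega)).trans
      (card_filter_le _ _)
  have : Nonempty (Fin (p + q)) := ⟨a⟩
  have hAA (u : Fin (p + q)) (hu : u ∈ A) := hG.sum_dist_left_le hconn hu (hdle u) hmA
  have hBB (u : Fin (p + q)) (hu : u ∈ B) := hG.symm.sum_dist_left_le hconn hu (hdle u) hmB
  have hAB (u : Fin (p + q)) (hu : u ∈ A) := sum_dist_le_of_neighborFinset_subset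
    (isBipartiteWith_neighborFinset_subset hG hu) (fun v _ => hdle u v) (hδAmin u hu)
  have hBA (u : Fin (p + q)) (hu : u ∈ B) := sum_dist_le_of_neighborFinset_subset
    (isBipartiteWith_neighborFinset_subset hG.symm hu) (fun v _ => hdle u v) (hδBmin u hu)
  refine (ciSup_le fun i => (distMatrix_isHermitian G).eigenvalues_le_perronRoot
    (fun _ _ => Nat.cast_nonneg _) hdisj hcover ⟨a, ha⟩ ⟨b, hb⟩ hAA hAB hBA hBB i).trans_eq ?_
  rw [perronRoot, hA, hB]
  push_cast
  rw [one_div_mul_eq_div]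
  congr 1
  · ring
  · congr 2; ring

/-- **Theorem 5 (odd diameter case).** For a connected bipartite graph `G` with `n`
vertices, odd diameter `d`, bipartition `A ∪ B` with `|A| = p`, `|B| = q`,
`p + q = n`, and minimum degrees `δ_A`, `δ_B` in `A`, `B`, we have
`ρ(G) ≤ (2(d-1)n + 1 - d²)/4 + (1/2)√((d-1)²n² + 4δ_Aδ_B(d-1)² + 4pq(2d-1) - 4d(d-1)(pδ_A + qδ_B))`. -/
theorem distSpectralRadius_bipartite_upper_bound_odd {n : ℕ} (G : SimpleGraph (Fin n))
    [DecidableRel G.Adj] (hconn : G.Connected) (A B : Finset (Fin n)) (p q d : ℕ)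
    (hdisj : Disjoint A B) (hcover : A ∪ B = Finset.univ)
    (hA : A.card = p) (hB : B.card = q) (hpq : p + q = n)
    (hbip : ∀ x y : Fin n, G.Adj x y → (x ∈ A ∧ y ∈ B) ∨ (x ∈ B ∧ y ∈ A))
    (hdle : ∀ x y : Fin n, G.dist x y ≤ d) (hdeq : ∃ x y : Fin n, G.dist x y = d)
    (δA δB : ℕ)
    (hδAmem : ∃ a ∈ A, G.degree a = δA) (hδAmin : ∀ a ∈ A, δA ≤ G.degree a)
    (hδBmem : ∃ b ∈ B, G.degree b = δB) (hδBmin : ∀ b ∈ B, δB ≤ G.degree b)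
    (hd : Odd d) :
    distSpectralRadius G ≤
      (2 * ((d : ℝ) - 1) * (n : ℝ) + 1 - (d : ℝ) ^ 2) / 4 +
        1 / 2 *
          Real.sqrt (((d : ℝ) - 1) ^ 2 * (n : ℝ) ^ 2 +
            4 * (δA : ℝ) * (δB : ℝ) * ((d : ℝ) - 1) ^ 2 +
            4 * (p : ℝ) * (q : ℝ) * (2 * (d : ℝ) - 1) -
            4 * (d : ℝ) * ((d : ℝ) - 1) * ((p : ℝ) * (δA : ℝ) + (q : ℝ) * (δB : ℝ))) :=
  distSpectralRadius_bipartite_upper_bound_odd_general G hconn A B p q d hdisj hcover hA hB hpq hbip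
    hdle hdeq δA δB hδAmin hδBmin hd
end

section
/- Let G be a connected graph and let v_r, v_s be two distinct nonadjacent vertices of G. Then ρ(G + v_r v_s) < ρ(G). -/
open SimpleGraph Finset

/-!
Let `D` and `D'` be the distance matrices of `G` and of `G + uv`. Adding an edge can only
shorten distances, so `D' ≤ D` entrywise, and `D' u v = 1 < 2 ≤ D u v`. Take a unit eigenvector
`x` of `D'` for its largest eigenvalue `ρ'`. Since `D'` is nonnegative, `|x|` has Rayleigh
quotient at least `ρ'`, hence exactly `ρ'`, so `|x|` is again an eigenvector for `ρ'`; as all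
off-diagonal entries of `D'` are positive, the eigenvalue equation forces `|x| > 0`. Then
`ρ' = |x|ᵀ D' |x| < |x|ᵀ D |x| ≤ ρ`.
-/

open scoped MatrixOrder

namespace Matrix

variable {ι : Type*} [Fintype ι]

lemma dotProduct_mulVec_eq_sum (A : Matrix ι ι ℝ) (x y : ι → ℝ) :
    x ⬝ᵥ A *ᵥ y = ∑ i, ∑ j, x i * A i j * y j := by
  simp only [dotProduct, mulVec, Finset.mul_sum, mul_assoc]

lemma dotProduct_mulVec_le_abs {A : Matrix ι ι ℝ} (hA_nonneg : ∀ i j, 0 ≤ A i j) (x : ι → ℝ) :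
    x ⬝ᵥ A *ᵥ x ≤ |x| ⬝ᵥ A *ᵥ |x| := by
  simp only [dotProduct_mulVec_eq_sum, Pi.abs_apply]
  refine Finset.sum_le_sum fun i _ => Finset.sum_le_sum fun j _ => ?_
  calc x i * A i j * x j ≤ |x i * A i j * x j| := le_abs_self _
    _ = |x i| * A i j * |x j| := by rw [abs_mul, abs_mul, abs_of_nonneg (hA_nonneg i j)]

lemma dotProduct_mulVec_lt_of_le_of_lt {A B : Matrix ι ι ℝ} (hle : ∀ i j, B i j ≤ A i j)
    {u v : ι} (hlt : B u v < A u v) {y : ι → ℝ} (hy : 0 ≤ y) (hu : 0 < y u) (hv : 0 < y v) :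
    y ⬝ᵥ B *ᵥ y < y ⬝ᵥ A *ᵥ y := by
  have hterm : ∀ i j, y i * B i j * y j ≤ y i * A i j * y j := fun i j => by
    have := hy i; have := hy j; gcongr; exact hle i j
  simp only [dotProduct_mulVec_eq_sum]
  refine Finset.sum_lt_sum (fun i _ => Finset.sum_le_sum fun j _ => hterm i j)
    ⟨u, Finset.mem_univ u, Finset.sum_lt_sum (fun j _ => hterm u j) ⟨v, Finset.mem_univ v, ?_⟩⟩
  gcongr

lemma pos_of_mulVec_eq_smul {A : Matrix ι ι ℝ} (hA_nonneg : ∀ i j, 0 ≤ A i j)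
    (hA_off : ∀ i j, i ≠ j → 0 < A i j) {r : ℝ} {y : ι → ℝ} (hy : 0 ≤ y) (hy₀ : y ≠ 0)
    (h : A *ᵥ y = r • y) (k : ι) : 0 < y k := by
  refine (hy k).lt_of_ne fun hk => hy₀ (funext fun j => ?_)
  have hsum : ∑ j, A k j * y j = 0 := by
    simpa [mulVec, dotProduct, ← hk] using congrFun h k
  have hzero := (Finset.sum_eq_zero_iff_of_nonneg fun j _ => mul_nonneg (hA_nonneg k j) (hy j)).mp hsum
  rcases eq_or_ne k j with rfl | hkj
  · exact hk.symm
  · exact (mul_eq_zero.mp (hzero j (Finset.mem_univ j))).resolve_left (hA_off k j hkj).ne'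

variable [DecidableEq ι] {A : Matrix ι ι ℝ} {r : ℝ}

lemma IsHermitian.eigenvalues_le_iSup (hA : A.IsHermitian) (i : ι) :
    hA.eigenvalues i ≤ ⨆ j, hA.eigenvalues j :=
  le_ciSup (Finite.bddAbove_range _) i

lemma IsHermitian.posSemidef_algebraMap_sub (hA : A.IsHermitian)
    (hr : ∀ i, hA.eigenvalues i ≤ r) : (algebraMap ℝ (Matrix ι ι ℝ) r - A).PosSemidef := by
  rw [← Matrix.le_iff]
  refine le_algebraMap_of_spectrum_le ?_ hA.isSelfAdjoint
  rw [hA.spectrum_real_eq_range_eigenvalues]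
  rintro _ ⟨i, rfl⟩
  exact hr i

lemma algebraMap_sub_mulVec (r : ℝ) (x : ι → ℝ) :
    (algebraMap ℝ (Matrix ι ι ℝ) r - A) *ᵥ x = r • x - A *ᵥ x := by
  rw [Algebra.algebraMap_eq_smul_one, sub_mulVec, smul_mulVec, one_mulVec]

lemma dotProduct_algebraMap_sub_mulVec (r : ℝ) (x : ι → ℝ) :
    x ⬝ᵥ (algebraMap ℝ (Matrix ι ι ℝ) r - A) *ᵥ x = r * (x ⬝ᵥ x) - x ⬝ᵥ A *ᵥ x := by
  rw [algebraMap_sub_mulVec, dotProduct_sub, dotProduct_smul, smul_eq_mul]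

lemma IsHermitian.dotProduct_mulVec_le (hA : A.IsHermitian) (hr : ∀ i, hA.eigenvalues i ≤ r)
    (x : ι → ℝ) : x ⬝ᵥ A *ᵥ x ≤ r * (x ⬝ᵥ x) := by
  have := (hA.posSemidef_algebraMap_sub hr).dotProduct_mulVec_nonneg x
  rw [star_trivial, dotProduct_algebraMap_sub_mulVec] at this
  linarith

lemma IsHermitian.mulVec_eq_smul_of_dotProduct_mulVec_eq (hA : A.IsHermitian)
    (hr : ∀ i, hA.eigenvalues i ≤ r) {x : ι → ℝ} (h : x ⬝ᵥ A *ᵥ x = r * (x ⬝ᵥ x)) :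
    A *ᵥ x = r • x := by
  have := ((hA.posSemidef_algebraMap_sub hr).dotProduct_mulVec_zero_iff x).mp
    (by rw [star_trivial, dotProduct_algebraMap_sub_mulVec, h, sub_self])
  rw [algebraMap_sub_mulVec, sub_eq_zero] at this
  exact this.symm

lemma IsHermitian.exists_nonneg_eigenvector_iSup [Nonempty ι] (hA : A.IsHermitian)
    (hA_nonneg : ∀ i j, 0 ≤ A i j) :
    ∃ y : ι → ℝ, 0 ≤ y ∧ y ≠ 0 ∧ A *ᵥ y = (⨆ i, hA.eigenvalues i) • y := by
  obtain ⟨i₀, hi₀⟩ := exists_eq_ciSup_of_finite (f := hA.eigenvalues)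
  set x : ι → ℝ := ⇑(hA.eigenvectorBasis i₀)
  have hxx : x ⬝ᵥ x = 1 := by
    have h := orthonormal_iff_ite.mp hA.eigenvectorBasis.orthonormal i₀ i₀
    rwa [if_pos rfl, EuclideanSpace.inner_eq_star_dotProduct, star_trivial] at h
  have habs : |x| ⬝ᵥ |x| = 1 := by
    rw [← hxx]
    exact Finset.sum_congr rfl fun k _ => abs_mul_abs_self (x k)
  have hρ : x ⬝ᵥ A *ᵥ x = ⨆ i, hA.eigenvalues i := by
    rw [hA.mulVec_eigenvectorBasis, hi₀, dotProduct_smul, hxx, smul_eq_mul, mul_one]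
  refine ⟨|x|, abs_nonneg x, fun h => by simp [h] at habs, ?_⟩
  refine hA.mulVec_eq_smul_of_dotProduct_mulVec_eq hA.eigenvalues_le_iSup (le_antisymm ?_ ?_)
  · exact hA.dotProduct_mulVec_le hA.eigenvalues_le_iSup |x|
  · rw [habs, mul_one, ← hρ]
    exact dotProduct_mulVec_le_abs hA_nonneg x

theorem iSup_eigenvalues_lt_of_le_of_lt {A B : Matrix ι ι ℝ} (hA : A.IsHermitian)
    (hB : B.IsHermitian) (hB_nonneg : ∀ i j, 0 ≤ B i j) (hB_off : ∀ i j, i ≠ j → 0 < B i j)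
    (hle : ∀ i j, B i j ≤ A i j) {u v : ι} (hlt : B u v < A u v) :
    ⨆ i, hB.eigenvalues i < ⨆ i, hA.eigenvalues i := by
  have : Nonempty ι := ⟨u⟩
  obtain ⟨y, hy, hy₀, hBy⟩ := hB.exists_nonneg_eigenvector_iSup hB_nonneg
  have hy_pos := pos_of_mulVec_eq_smul hB_nonneg hB_off hy hy₀ hBy
  have hyy : 0 < y ⬝ᵥ y := by simpa using dotProduct_star_self_pos_iff.mpr hy₀
  refine lt_of_mul_lt_mul_right ?_ hyy.le
  calc (⨆ i, hB.eigenvalues i) * (y ⬝ᵥ y) = y ⬝ᵥ B *ᵥ y := by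
        rw [hBy, dotProduct_smul, smul_eq_mul]
    _ < y ⬝ᵥ A *ᵥ y := dotProduct_mulVec_lt_of_le_of_lt hle hlt hy (hy_pos u) (hy_pos v)
    _ ≤ (⨆ i, hA.eigenvalues i) * (y ⬝ᵥ y) := hA.dotProduct_mulVec_le hA.eigenvalues_le_iSup y

end Matrix

lemma SimpleGraph.Connected.distMatrix_anti {V : Type*} [Fintype V] {G H : SimpleGraph V}
    (hG : G.Connected) (h : G ≤ H) (i j : V) : distMatrix H i j ≤ distMatrix G i j :=
  Nat.cast_le.mpr ((hG i j).dist_anti h)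

lemma SimpleGraph.Connected.distMatrix_pos {V : Type*} [Fintype V] {G : SimpleGraph V}
    (hG : G.Connected) {i j : V} (h : i ≠ j) : 0 < distMatrix G i j :=
  Nat.cast_pos.mpr ((hG i j).pos_dist_of_ne h)

/-- Adding an edge between two distinct nonadjacent vertices of a connected graph
strictly decreases the distance spectral radius. -/
theorem distSpectralRadius_lt_of_addEdge {n : ℕ} (G : SimpleGraph (Fin n))
    (hconn : G.Connected) (u v : Fin n) (hne : u ≠ v) (hnadj : ¬ G.Adj u v) :
    distSpectralRadius (G ⊔ fromEdgeSet {s(u, v)}) < distSpectralRadius G := by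
  set H := G ⊔ fromEdgeSet {s(u, v)}
  have hGH : G ≤ H := le_sup_left
  have hH_adj : H.Adj u v := Or.inr ((fromEdgeSet_adj _).mpr ⟨rfl, hne⟩)
  have hlt : distMatrix H u v < distMatrix G u v := by
    simp only [distMatrix, dist_eq_one_iff_adj.mpr hH_adj]
    exact_mod_cast (hconn u v).one_lt_dist_of_ne_of_not_adj hne hnadj
  exact Matrix.iSup_eigenvalues_lt_of_le_of_lt (distMatrix_isHermitian G)
    (distMatrix_isHermitian H) (fun _ _ => Nat.cast_nonneg _)
    (fun _ _ => (hconn.mono hGH).distMatrix_pos)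
    (hconn.distMatrix_anti hGH) hlt
end

section
/- Let G be a connected graph with n ≥ 2 vertices and m edges. Then DE(G) ≥ 4(n − 1) − 4m/n. -/
open SimpleGraph Finset

/-! The distance matrix has zero trace, so its eigenvalues sum to zero and the energy is at least
twice the largest eigenvalue `ρ`. The Rayleigh quotient of the all-ones vector gives `n ρ ≥ ∑ᵢⱼ dᵢⱼ`,
and in a connected graph every pair of distinct non-adjacent vertices is at distance at least `2`,
so `∑ᵢⱼ dᵢⱼ ≥ 2 n (n - 1) - 2 m`. -/

lemma two_mul_le_sum_abs_of_sum_eq_zero {ι : Type*} [Fintype ι] {f : ι → ℝ}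
    (hf : ∑ i, f i = 0) (j : ι) : 2 * f j ≤ ∑ i, |f i| := by
  classical
  have hrest := abs_sum_le_sum_abs f (univ.erase j)
  rw [sum_erase_eq_sub (mem_univ j), hf, zero_sub, abs_neg] at hrest
  rw [← add_sum_erase _ _ (mem_univ j)]
  linarith [le_abs_self (f j)]

namespace Matrix

lemma dotProduct_mulVec_mul_mul_transpose {n : Type*} [Fintype n] {R : Type*} [CommSemiring R]
    (U B : Matrix n n R) (v : n → R) :
    v ⬝ᵥ ((U * B * Uᵀ) *ᵥ v) = (Uᵀ *ᵥ v) ⬝ᵥ (B *ᵥ (Uᵀ *ᵥ v)) := by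
  rw [← mulVec_mulVec, ← mulVec_mulVec, dotProduct_mulVec, mulVec_transpose]

namespace IsHermitian

variable {n : Type*} [Fintype n] [DecidableEq n] {A : Matrix n n ℝ} (hA : A.IsHermitian)
include hA

lemma dotProduct_mulVec_le_iSup_eigenvalues_mul (v : n → ℝ) :
    v ⬝ᵥ (A *ᵥ v) ≤ (⨆ i, hA.eigenvalues i) * (v ⬝ᵥ v) := by
  set U : Matrix n n ℝ := (hA.eigenvectorUnitary : Matrix n n ℝ)
  have hA' : A = U * diagonal hA.eigenvalues * Uᵀ := by
    conv_lhs => rw [hA.spectral_theorem]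
    simp [U, Unitary.conjStarAlgAut_apply, star_eq_conjTranspose]
  have hUU : U * 1 * Uᵀ = 1 := by
    simpa [U, star_eq_conjTranspose] using Unitary.coe_mul_star_self hA.eigenvectorUnitary
  set w := Uᵀ *ᵥ v
  have hvv : v ⬝ᵥ v = ∑ i, w i ^ 2 := by
    calc v ⬝ᵥ v = v ⬝ᵥ ((U * 1 * Uᵀ) *ᵥ v) := by rw [hUU, one_mulVec]
      _ = ∑ i, w i ^ 2 := by
        rw [dotProduct_mulVec_mul_mul_transpose, one_mulVec]
        simp only [dotProduct, sq, w]
  calc v ⬝ᵥ (A *ᵥ v) = ∑ i, hA.eigenvalues i * w i ^ 2 := by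
        conv_lhs => rw [hA', dotProduct_mulVec_mul_mul_transpose]
        simp only [dotProduct, mulVec_diagonal, sq, w]
        exact sum_congr rfl fun i _ => by ring
    _ ≤ ∑ i, (⨆ j, hA.eigenvalues j) * w i ^ 2 := by
        gcongr with i
        exact le_ciSup (Finite.bddAbove_range _) i
    _ = (⨆ i, hA.eigenvalues i) * (v ⬝ᵥ v) := by rw [hvv, mul_sum]

lemma sum_apply_le_iSup_eigenvalues_mul_card :
    ∑ i, ∑ j, A i j ≤ (⨆ i, hA.eigenvalues i) * Fintype.card n := by
  simpa [dotProduct, mulVec] using hA.dotProduct_mulVec_le_iSup_eigenvalues_mul fun _ => 1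

lemma two_mul_iSup_eigenvalues_le_sum_abs [Nonempty n] (htr : A.trace = 0) :
    2 * (⨆ i, hA.eigenvalues i) ≤ ∑ i, |hA.eigenvalues i| := by
  obtain ⟨j, hj⟩ := exists_eq_ciSup_of_finite (f := hA.eigenvalues)
  rw [← hj]
  refine two_mul_le_sum_abs_of_sum_eq_zero ?_ j
  simpa [htr] using hA.trace_eq_sum_eigenvalues.symm

end IsHermitian

end Matrix

namespace SimpleGraph

variable {V : Type*} [Fintype V] {G : SimpleGraph V} [DecidableRel G.Adj]

lemma Connected.two_mul_card_sub_one_le_sum_dist_add_degree (hG : G.Connected) (u : V) :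
    2 * (Fintype.card V - 1) ≤ ∑ v, G.dist u v + G.degree u := by
  classical
  have hpair : ∀ v ∈ univ.erase u, 2 ≤ G.dist u v + if G.Adj u v then 1 else 0 := by
    intro v hv
    have hne : u ≠ v := (ne_of_mem_erase hv).symm
    split_ifs with hadj
    · have := hG.pos_dist_of_ne hne
      omega
    · have := hG.one_lt_dist_of_ne_of_not_adj hne hadj
      omega
  calc 2 * (Fintype.card V - 1) = ∑ v ∈ univ.erase u, 2 := by
        simp [card_erase_of_mem, mul_comm]
    _ ≤ ∑ v ∈ univ.erase u, (G.dist u v + if G.Adj u v then 1 else 0) := sum_le_sum hpair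
    _ ≤ ∑ v, (G.dist u v + if G.Adj u v then 1 else 0) :=
        sum_le_sum_of_subset (erase_subset u univ)
    _ = ∑ v, G.dist u v + G.degree u := by
        rw [sum_add_distrib, sum_boole, Nat.cast_id, ← card_neighborFinset_eq_degree,
          neighborFinset_eq_filter]

lemma Connected.two_mul_card_mul_card_sub_one_le_sum_dist_add (hG : G.Connected) :
    2 * (Fintype.card V * (Fintype.card V - 1)) ≤ ∑ u, ∑ v, G.dist u v + 2 * #G.edgeFinset := by
  calc 2 * (Fintype.card V * (Fintype.card V - 1)) = ∑ _u : V, 2 * (Fintype.card V - 1) := by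
        simp only [sum_const, card_univ, smul_eq_mul]
        ring
    _ ≤ ∑ u, (∑ v, G.dist u v + G.degree u) :=
        sum_le_sum fun u _ => hG.two_mul_card_sub_one_le_sum_dist_add_degree u
    _ = ∑ u, ∑ v, G.dist u v + 2 * #G.edgeFinset := by
        rw [sum_add_distrib, sum_degrees_eq_twice_card_edges]

end SimpleGraph

lemma trace_distMatrix {V : Type*} [Fintype V] (G : SimpleGraph V) : (distMatrix G).trace = 0 := by
  simp [Matrix.trace, distMatrix]

theorem distEnergy_ge_edges_general {n : ℕ} (G : SimpleGraph (Fin n))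
    [DecidableRel G.Adj] (hconn : G.Connected) (m : ℕ) (hm : G.edgeFinset.card = m) :
    4 * ((n : ℝ) - 1) - 4 * (m : ℝ) / (n : ℝ) ≤ distEnergy G := by
  have : Nonempty (Fin n) := hconn.nonempty
  have hn : 1 ≤ n := Fin.pos'
  have hD := distMatrix_isHermitian G
  have hsum : 2 * ((n : ℝ) * (n - 1)) - 2 * m ≤ ∑ u, ∑ v, distMatrix G u v := by
    have := hconn.two_mul_card_mul_card_sub_one_le_sum_dist_add
    rw [hm, Fintype.card_fin] at this
    have hcast := (Nat.cast_le (α := ℝ)).2 this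
    push_cast [Nat.cast_sub hn] at hcast
    simp only [distMatrix]
    linarith
  have hρ : ∑ u, ∑ v, distMatrix G u v ≤ distSpectralRadius G * n := by
    have := hD.sum_apply_le_iSup_eigenvalues_mul_card
    rwa [Fintype.card_fin] at this
  calc 4 * ((n : ℝ) - 1) - 4 * m / n = 2 * ((2 * (n * (n - 1)) - 2 * m) / n) := by
        field_simp
        ring
    _ ≤ 2 * distSpectralRadius G := by
        gcongr
        rw [div_le_iff₀ (by positivity)]
        linarith
    _ ≤ distEnergy G := hD.two_mul_iSup_eigenvalues_le_sum_abs (trace_distMatrix G)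

/-- For a connected graph `G` with `n ≥ 2` vertices and `m` edges,
`DE(G) ≥ 4(n-1) - 4m/n`. -/
theorem distEnergy_ge_edges {n : ℕ} (hn : 2 ≤ n) (G : SimpleGraph (Fin n))
    [DecidableRel G.Adj] (hconn : G.Connected) (m : ℕ) (hm : G.edgeFinset.card = m) :
    4 * ((n : ℝ) - 1) - 4 * (m : ℝ) / (n : ℝ) ≤ distEnergy G :=
  distEnergy_ge_edges_general G hconn m hm
end

section
/- Let G be a connected graph with n vertices, maximum degree Δ₁ and second maximum degree Δ₂. Then DE(G) ≥ 2·√((2n−2−Δ₁)(2n−2−Δ₂)). -/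
open SimpleGraph Finset

/-!
The trace of `D(G)` is zero, so the eigenvalues sum to zero and `DE(G)` is at least twice the
largest eigenvalue `ρ`. By the Rayleigh principle with the all-ones vector, `n ρ` is at least the
sum of all distances. In a connected graph a vertex `w` is at distance `1` from its `deg w`
neighbours and at distance at least `2` from the other `n - 1 - deg w` vertices, so the sum of all
distances is at least `a + (n - 1) b` with `a = 2n - 2 - Δ₁` and `b = 2n - 2 - Δ₂`. Since
`a ≤ b`, this is at least `n √(a b)`.
-/

theorem Finset.sum_add_le_add_card_nsmul {ι M : Type*} [Fintype ι] [AddCommMonoid M]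
    [PartialOrder M] [IsOrderedAddMonoid M] {f : ι → M} {A B : M} (u : ι) (hu : f u ≤ A)
    (hB : ∀ w, w ≠ u → f w ≤ B) :
    ∑ w, f w + B ≤ A + Fintype.card ι • B := by
  classical
  rw [← add_sum_erase _ _ (mem_univ u), ← card_univ, ← card_erase_add_one (mem_univ u),
    succ_nsmul, add_assoc]
  gcongr
  exact sum_le_card_nsmul _ _ _ fun w hw ↦ hB w (ne_of_mem_erase hw)

theorem two_mul_iSup_le_sum_abs_of_sum_eq_zero {ι : Type*} [Fintype ι] [Nonempty ι]
    {f : ι → ℝ} (hf : ∑ i, f i = 0) :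
    2 * ⨆ i, f i ≤ ∑ i, |f i| := by
  obtain ⟨j, hj⟩ := exists_eq_ciSup_of_finite (f := f)
  have hsingle : f j + |f j| ≤ ∑ i, (f i + |f i|) :=
    single_le_sum (fun i _ ↦ neg_le_iff_add_nonneg.mp (neg_abs_le (f i))) (mem_univ j)
  rw [sum_add_distrib, hf, zero_add] at hsingle
  linarith [le_abs_self (f j)]

theorem mul_sqrt_mul_le_max_add_sub_one_mul {n a b : ℝ} (hn : 2 ≤ n) (hb : 0 ≤ b)
    (hab : a ≤ b) :
    n * √(a * b) ≤ max (a + (n - 1) * b) 0 := by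
  rcases le_or_gt a 0 with ha | ha
  · rw [Real.sqrt_eq_zero'.mpr (mul_nonpos_of_nonpos_of_nonneg ha hb)]
    simp
  have hsq : (n * √(a * b)) ^ 2 ≤ (a + (n - 1) * b) ^ 2 := by
    have hn1 : 1 ≤ (n - 1) ^ 2 := by nlinarith
    have hfactor : 0 ≤ (b - a) * ((n - 1) ^ 2 * b - a) :=
      mul_nonneg (by linarith) (by nlinarith [mul_le_mul_of_nonneg_right hn1 hb])
    rw [mul_pow, Real.sq_sqrt (by positivity)]
    nlinarith
  exact le_max_of_le_left <|
    (pow_le_pow_iff_left₀ (by positivity) (by nlinarith) two_ne_zero).mp hsq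

open Matrix in
open scoped MatrixOrder in
theorem Matrix.IsHermitian.dotProduct_mulVec_le_iSup_eigenvalues_mul_s14 {n : Type*} [Fintype n]
    [DecidableEq n] {A : Matrix n n ℝ} (hA : A.IsHermitian) (x : n → ℝ) :
    x ⬝ᵥ A *ᵥ x ≤ (⨆ i, hA.eigenvalues i) * (x ⬝ᵥ x) := by
  have hle : A ≤ algebraMap ℝ (Matrix n n ℝ) (⨆ i, hA.eigenvalues i) := by
    refine le_algebraMap_of_spectrum_le (fun r hr ↦ ?_) hA.isSelfAdjoint
    obtain ⟨i, rfl⟩ := hA.spectrum_real_eq_range_eigenvalues ▸ hr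
    exact le_ciSup (Set.finite_range _).bddAbove i
  simpa [sub_mulVec, Algebra.algebraMap_eq_smul_one, smul_mulVec, dotProduct_smul] using
    (Matrix.le_iff.mp hle).dotProduct_mulVec_nonneg x

namespace SimpleGraph

variable {V : Type*} [Fintype V]

theorem Connected.two_mul_card_le_sum_dist_add_degree [DecidableEq V] {G : SimpleGraph V}
    [DecidableRel G.Adj] (hG : G.Connected) (w : V) :
    2 * Fintype.card V ≤ ∑ x, G.dist w x + G.degree w + 2 := by
  have hpointwise (x : V) :
      2 ≤ G.dist w x + (if G.Adj w x then 1 else 0) + (if w = x then 2 else 0) := by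
    by_cases hwx : w = x
    · simp [hwx]
    have hpos := hG.pos_dist_of_ne hwx
    by_cases hadj : G.Adj w x
    · simp only [hadj, hwx, if_true, if_false]
      omega
    · have hne : G.dist w x ≠ 1 := mt dist_eq_one_iff_adj.mp hadj
      simp only [hadj, hwx, if_false]
      omega
  calc 2 * Fintype.card V = ∑ _x : V, 2 := by simp [mul_comm]
    _ ≤ ∑ x, (G.dist w x + (if G.Adj w x then 1 else 0) + (if w = x then 2 else 0)) :=
      sum_le_sum fun x _ ↦ hpointwise x
    _ = ∑ x, G.dist w x + G.degree w + 2 := by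
      simp [sum_add_distrib, sum_boole, degree, neighborFinset_eq_filter]

theorem Connected.sum_dist_lower_bound [DecidableEq V] {G : SimpleGraph V} [DecidableRel G.Adj]
    (hG : G.Connected) {Δ₁ Δ₂ : ℝ} (u : V) (hu : G.degree u ≤ Δ₁)
    (hΔ₂ : ∀ w, w ≠ u → G.degree w ≤ Δ₂) :
    (2 * Fintype.card V - 2 - Δ₁) + (Fintype.card V - 1) * (2 * Fintype.card V - 2 - Δ₂) ≤
      ∑ w, ∑ x, (G.dist w x : ℝ) := by
  have hdegree := sum_add_le_add_card_nsmul (f := fun w ↦ (G.degree w : ℝ)) u hu hΔ₂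
  have hrows := sum_le_sum fun w (_ : w ∈ univ) ↦
    Nat.cast_le (α := ℝ) |>.mpr (hG.two_mul_card_le_sum_dist_add_degree w)
  push_cast at hrows
  simp only [sum_add_distrib, sum_const, card_univ, nsmul_eq_mul] at hrows hdegree
  linarith

variable [DecidableEq V] (G : SimpleGraph V)

theorem sum_eigenvalues_distMatrix : ∑ i, (distMatrix_isHermitian G).eigenvalues i = 0 := by
  have := (distMatrix_isHermitian G).trace_eq_sum_eigenvalues
  simp_all [Matrix.trace, distMatrix]

theorem two_mul_distSpectralRadius_le_distEnergy [Nonempty V] :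
    2 * distSpectralRadius G ≤ distEnergy G :=
  two_mul_iSup_le_sum_abs_of_sum_eq_zero (sum_eigenvalues_distMatrix G)

open Matrix in
theorem sum_dist_le_card_mul_distSpectralRadius :
    ∑ w, ∑ x, (G.dist w x : ℝ) ≤ Fintype.card V * distSpectralRadius G := by
  have := (distMatrix_isHermitian G).dotProduct_mulVec_le_iSup_eigenvalues_mul_s14 1
  simp only [mulVec, dotProduct, Pi.one_apply, one_mul, mul_one, sum_const, card_univ,
    nsmul_eq_mul] at this
  exact this.trans_eq (mul_comm _ _)

end SimpleGraph

theorem distEnergy_lower_bound_degrees_general {n : ℕ} (G : SimpleGraph (Fin n))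
    [DecidableRel G.Adj] (hconn : G.Connected) (Δ₁ Δ₂ : ℕ) (u v : Fin n) (huv : u ≠ v)
    (hv : G.degree v = Δ₂)
    (hmax : ∀ w, G.degree w ≤ Δ₁) (hmax2 : ∀ w, w ≠ u → G.degree w ≤ Δ₂) :
    2 * Real.sqrt ((2 * (n : ℝ) - 2 - (Δ₁ : ℝ)) * (2 * (n : ℝ) - 2 - (Δ₂ : ℝ))) ≤
      distEnergy G := by
  have hn : (2 : ℝ) ≤ n := by
    exact_mod_cast (by simpa using Fintype.one_lt_card_iff_nontrivial.mpr ⟨u, v, huv⟩ : 1 < n)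
  have hΔ₂ : (Δ₂ : ℝ) ≤ Δ₁ := by exact_mod_cast hv ▸ hmax v
  have hΔ₂n : (Δ₂ : ℝ) + 1 ≤ n := by
    exact_mod_cast (by simpa [hv] using G.degree_lt_card_verts v : Δ₂ < n)
  have hsum := hconn.sum_dist_lower_bound (Δ₁ := Δ₁) (Δ₂ := Δ₂) u (by exact_mod_cast hmax u)
    fun w hw ↦ by exact_mod_cast hmax2 w hw
  have hρ := sum_dist_le_card_mul_distSpectralRadius G
  simp only [Fintype.card_fin] at hsum hρ
  have hsqrt := mul_sqrt_mul_le_max_add_sub_one_mul (a := 2 * (n : ℝ) - 2 - Δ₁)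
    (b := 2 * (n : ℝ) - 2 - Δ₂) hn (by linarith) (by linarith)
  have hρ' : √((2 * (n : ℝ) - 2 - Δ₁) * (2 * (n : ℝ) - 2 - Δ₂)) ≤ distSpectralRadius G :=
    le_of_mul_le_mul_left ((hsqrt.trans (max_le hsum (by positivity))).trans hρ) (by linarith)
  have : Nonempty (Fin n) := ⟨u⟩
  linarith [two_mul_distSpectralRadius_le_distEnergy G]

/-- For a connected graph `G` on `n` vertices with maximum degree `Δ₁` and second
maximum degree `Δ₂`, `DE(G) ≥ 2√((2n-2-Δ₁)(2n-2-Δ₂))`. -/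
theorem distEnergy_lower_bound_degrees {n : ℕ} (G : SimpleGraph (Fin n))
    [DecidableRel G.Adj] (hconn : G.Connected) (Δ₁ Δ₂ : ℕ) (u v : Fin n) (huv : u ≠ v)
    (hu : G.degree u = Δ₁) (hv : G.degree v = Δ₂)
    (hmax : ∀ w, G.degree w ≤ Δ₁) (hmax2 : ∀ w, w ≠ u → G.degree w ≤ Δ₂) :
    2 * Real.sqrt ((2 * (n : ℝ) - 2 - (Δ₁ : ℝ)) * (2 * (n : ℝ) - 2 - (Δ₂ : ℝ))) ≤
      distEnergy G :=
  distEnergy_lower_bound_degrees_general G hconn Δ₁ Δ₂ u v huv hv hmax hmax2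
end
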